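/- arXiv:1401.4769 — 3 statements merged into one kernel-verified Lean document; each statement's English description precedes it below -/
import Mathlib

section
/- For any real λ₀ and any real λ₁, the integral over ℝ of φ(x)·Φ(λ₀ + λ₁x) dx equals Φ(λ₀/√(1+λ₁²)), where φ and Φ are the standard normal density and cumulative distribution function. -/
/-!
If `X` and `Y` are independent standard normal variables, then `Φ(λ₀ + λ₁ x) = P(Y - λ₁ x ≤ λ₀)`,
so averaging over `x ∼ X` gives `P(Y - λ₁ X ≤ λ₀)`. The law of `Y - λ₁ X` is the convolution
`N(0, λ₁²) ∗ N(0, 1) = N(0, 1 + λ₁²)`, whose CDF at `λ₀` is `Φ(λ₀ / √(1 + λ₁²))`.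
-/

open MeasureTheory Real

/-- Standard normal density. -/
noncomputable def stdPhi (x : ℝ) : ℝ := (Real.sqrt (2 * Real.pi))⁻¹ * Real.exp (-(x ^ 2) / 2)

/-- Standard normal CDF. -/
noncomputable def stdPhiCDF (t : ℝ) : ℝ := ∫ u in Set.Iic t, stdPhi u

open ProbabilityTheory Set NNReal

lemma cdf_conv (μ ν : Measure ℝ) [IsProbabilityMeasure μ] [IsProbabilityMeasure ν] (t : ℝ) :
    cdf (μ ∗ ν) t = ∫ x, cdf ν (t - x) ∂μ := by
  rw [cdf_eq_real, ← integral_indicator_one measurableSet_Iic,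
    integral_conv ((integrable_const 1).indicator measurableSet_Iic)]
  refine integral_congr_ae (ae_of_all _ fun x ↦ ?_)
  dsimp only
  rw [cdf_eq_real, ← integral_indicator_one measurableSet_Iic]
  congr 1
  ext y
  simp [indicator_apply, le_sub_iff_add_le']

lemma integral_cdf_sub_eq_cdf_map_conv (μ ν : Measure ℝ) [IsProbabilityMeasure μ]
    [IsProbabilityMeasure ν] {f : ℝ → ℝ} (hf : Measurable f) (t : ℝ) :
    ∫ x, cdf ν (t - f x) ∂μ = cdf (μ.map f ∗ ν) t := by
  have : IsProbabilityMeasure (μ.map f) := Measure.isProbabilityMeasure_map hf.aemeasurable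
  rw [cdf_conv, integral_map hf.aemeasurable]
  exact ((cdf ν).mono.measurable.comp (measurable_const.sub measurable_id)).aestronglyMeasurable

lemma cdf_map_const_mul (μ : Measure ℝ) [IsProbabilityMeasure μ] {c : ℝ} (hc : 0 < c) (t : ℝ) :
    cdf (μ.map (c * ·)) t = cdf μ (t / c) := by
  have : IsProbabilityMeasure (μ.map (c * ·)) := Measure.isProbabilityMeasure_map (by fun_prop)
  rw [cdf_eq_real, cdf_eq_real, map_measureReal_apply (by fun_prop) measurableSet_Iic]
  congr 1
  ext x
  simp [le_div_iff₀' hc]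

lemma cdf_gaussianReal_zero_mean {v : ℝ≥0} (hv : v ≠ 0) (t : ℝ) :
    cdf (gaussianReal 0 v) t = cdf (gaussianReal 0 1) (t / √v) := by
  have hmap : (gaussianReal 0 1).map (√v * ·) = gaussianReal 0 v := by
    rw [gaussianReal_map_const_mul, mul_zero]
    congr
    ext
    simp
  rw [← cdf_map_const_mul _ (by positivity), hmap]

lemma map_const_mul_conv_gaussianReal (c : ℝ) :
    (gaussianReal 0 1).map (c * ·) ∗ gaussianReal 0 1
      = gaussianReal 0 ⟨1 + c ^ 2, by positivity⟩ := by
  rw [gaussianReal_map_const_mul, gaussianReal_conv_gaussianReal, mul_zero, zero_add]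
  congr 1
  ext
  simp only [NNReal.coe_add, NNReal.coe_mk, NNReal.coe_one, mul_one]
  exact add_comm _ _

lemma stdPhi_eq_gaussianPDFReal : stdPhi = gaussianPDFReal 0 1 := by
  ext x
  simp [stdPhi, gaussianPDFReal]

lemma integral_stdPhi_mul (f : ℝ → ℝ) :
    ∫ x, stdPhi x * f x = ∫ x, f x ∂gaussianReal 0 1 := by
  simp [integral_gaussianReal_eq_integral_smul one_ne_zero, stdPhi_eq_gaussianPDFReal]

lemma stdPhiCDF_eq_cdf (t : ℝ) : stdPhiCDF t = cdf (gaussianReal 0 1) t := by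
  rw [cdf_eq_real, measureReal_def, gaussianReal_apply_eq_integral _ one_ne_zero,
    ENNReal.toReal_ofReal (setIntegral_nonneg measurableSet_Iic fun _ _ ↦
      gaussianPDFReal_nonneg _ _ _), stdPhiCDF, stdPhi_eq_gaussianPDFReal]

theorem stmt0 (lam0 lam1 : ℝ) :
    ∫ x : ℝ, stdPhi x * stdPhiCDF (lam0 + lam1 * x) =
      stdPhiCDF (lam0 / Real.sqrt (1 + lam1 ^ 2)) := by
  have hv : (⟨1 + lam1 ^ 2, by positivity⟩ : ℝ≥0) ≠ 0 :=
    ne_of_gt (show (0 : ℝ) < 1 + lam1 ^ 2 by positivity)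
  calc ∫ x, stdPhi x * stdPhiCDF (lam0 + lam1 * x)
      = ∫ x, cdf (gaussianReal 0 1) (lam0 - -lam1 * x) ∂gaussianReal 0 1 := by
        simp only [integral_stdPhi_mul, stdPhiCDF_eq_cdf, neg_mul, sub_neg_eq_add]
    _ = cdf ((gaussianReal 0 1).map (-lam1 * ·) ∗ gaussianReal 0 1) lam0 :=
        integral_cdf_sub_eq_cdf_map_conv _ _ (by fun_prop) lam0
    _ = cdf (gaussianReal 0 ⟨1 + lam1 ^ 2, by positivity⟩) lam0 := by
        simp only [map_const_mul_conv_gaussianReal, neg_sq]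
    _ = stdPhiCDF (lam0 / Real.sqrt (1 + lam1 ^ 2)) := by
        rw [cdf_gaussianReal_zero_mean hv, stdPhiCDF_eq_cdf]
        rfl
end

section
/- For a univariate predictor: if X ~ N(0, σ²_X) and Y | X ~ Bernoulli(Φ(γ₀ + γX)), then the population simple-regression slope Cov(X,Y)/Var(X) equals γ·φ(0; γ₀, 1 + γ²σ²_X). Consequently, the slope is zero if and only if γ = 0. -/
open MeasureTheory Real

/-- Density at `t` of a normal distribution with mean `μ` and variance `v`. -/
noncomputable def normalPDF (t μ v : ℝ) : ℝ :=
  (Real.sqrt (2 * Real.pi * v))⁻¹ * Real.exp (-((t - μ) ^ 2) / (2 * v))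

/-!
Writing `p` for the density of `N(0, σ²)`, one has `x p(x) = -σ² p'(x)`, so integration by parts
(Stein's lemma) gives `E[X g(X)] = σ² E[g'(X)]` for bounded differentiable `g`. For
`g(x) = Φ(γ₀ + γx)` the slope is therefore `γ E[φ(γ₀ + γX)]`, and completing the square in the
exponent of `φ(γ₀ + γx) p(x)` gives `E[φ(γ₀ + γX)] = φ(0; γ₀, 1 + γ²σ²) > 0`.
-/

open Filter Set ProbabilityTheory

section NormalPDF

lemma normalPDF_eq_gaussianPDFReal {v : ℝ} (hv : 0 ≤ v) (t μ : ℝ) :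
    normalPDF t μ v = gaussianPDFReal μ v.toNNReal t := by
  simp [normalPDF, gaussianPDFReal, Real.coe_toNNReal _ hv]

lemma normalPDF_pos {v : ℝ} (hv : 0 < v) (t μ : ℝ) : 0 < normalPDF t μ v := by
  have : 0 < √(2 * π * v) := sqrt_pos.2 (by positivity)
  unfold normalPDF
  positivity

lemma normalPDF_le {v : ℝ} (hv : 0 ≤ v) (t μ : ℝ) : normalPDF t μ v ≤ (√(2 * π * v))⁻¹ := by
  refine mul_le_of_le_one_right (by positivity) (exp_le_one_iff.2 ?_)
  exact div_nonpos_of_nonpos_of_nonneg (neg_nonpos.2 (sq_nonneg _)) (by positivity)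

lemma continuous_normalPDF (μ v : ℝ) : Continuous (normalPDF · μ v) := by
  unfold normalPDF
  fun_prop

lemma integrable_normalPDF {v : ℝ} (hv : 0 ≤ v) (μ : ℝ) : Integrable (normalPDF · μ v) := by
  simpa only [normalPDF_eq_gaussianPDFReal hv] using integrable_gaussianPDFReal μ v.toNNReal

lemma integral_normalPDF {v : ℝ} (hv : 0 < v) (μ : ℝ) : ∫ t, normalPDF t μ v = 1 := by
  simp only [normalPDF_eq_gaussianPDFReal hv.le]
  exact integral_gaussianPDFReal_eq_one μ (by simpa using hv)

lemma integrable_mul_normalPDF {v : ℝ} (hv : 0 < v) :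
    Integrable fun x => x * normalPDF x 0 v := by
  refine ((integrable_mul_exp_neg_mul_sq (b := 1 / (2 * v)) (by positivity)).const_mul
    (√(2 * π * v))⁻¹).congr (Eventually.of_forall fun x => ?_)
  simp only [normalPDF]
  ring_nf

lemma hasDerivAt_normalPDF {v : ℝ} (hv : v ≠ 0) (μ t : ℝ) :
    HasDerivAt (normalPDF · μ v) (-((t - μ) / v) * normalPDF t μ v) t := by
  have hexp : HasDerivAt (fun s => -((s - μ) ^ 2) / (2 * v)) (-((t - μ) / v)) t := by
    refine ((((hasDerivAt_id' t).sub_const μ).pow 2).neg.div_const (2 * v)).congr_deriv ?_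
    field_simp
    ring
  refine (hexp.exp.const_mul (√(2 * π * v))⁻¹).congr_deriv ?_
  rw [normalPDF]
  ring

end NormalPDF

section StdNormal

lemma stdPhi_eq_normalPDF (x : ℝ) : stdPhi x = normalPDF x 0 1 := by
  simp [stdPhi, normalPDF]

lemma stdPhiCDF_nonneg (t : ℝ) : 0 ≤ stdPhiCDF t :=
  setIntegral_nonneg measurableSet_Iic fun x _ =>
    (stdPhi_eq_normalPDF x).symm ▸ (normalPDF_pos one_pos x 0).le

lemma stdPhiCDF_le_one (t : ℝ) : stdPhiCDF t ≤ 1 :=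
  calc stdPhiCDF t = ∫ x in Iic t, normalPDF x 0 1 := by
        simp only [stdPhiCDF, stdPhi_eq_normalPDF]
    _ ≤ ∫ x, normalPDF x 0 1 := setIntegral_le_integral (integrable_normalPDF zero_le_one 0)
        (Eventually.of_forall fun x => (normalPDF_pos one_pos x 0).le)
    _ = 1 := integral_normalPDF one_pos 0

lemma hasDerivAt_stdPhiCDF (t : ℝ) : HasDerivAt stdPhiCDF (stdPhi t) t := by
  have hint : Integrable stdPhi := by
    simpa only [← stdPhi_eq_normalPDF] using integrable_normalPDF zero_le_one 0
  have hcont : Continuous stdPhi := by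
    simpa only [← stdPhi_eq_normalPDF] using continuous_normalPDF 0 1
  have hsplit : stdPhiCDF = fun u => stdPhiCDF 0 + ∫ x in (0 : ℝ)..u, stdPhi x := by
    funext u
    rw [← intervalIntegral.integral_Iic_sub_Iic hint.integrableOn hint.integrableOn, stdPhiCDF,
      stdPhiCDF, add_sub_cancel]
  rw [hsplit]
  exact (intervalIntegral.integral_hasDerivAt_right hint.intervalIntegrable
    (hcont.stronglyMeasurableAtFilter _ _) hcont.continuousAt).const_add _

lemma integrable_stdPhi_affine_mul_normalPDF {v : ℝ} (hv : 0 ≤ v) (a c : ℝ) :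
    Integrable fun x => stdPhi (a + c * x) * normalPDF x 0 v := by
  refine (integrable_normalPDF hv 0).bdd_mul (c := (√(2 * π * 1))⁻¹) ?_
    (Eventually.of_forall fun x => ?_)
  · simp only [stdPhi_eq_normalPDF]
    exact ((continuous_normalPDF 0 1).comp (by fun_prop)).aestronglyMeasurable
  · rw [stdPhi_eq_normalPDF, norm_of_nonneg (normalPDF_pos one_pos _ 0).le]
    exact normalPDF_le zero_le_one _ 0

lemma integral_stdPhi_affine_mul_normalPDF {v : ℝ} (hv : 0 < v) (a c : ℝ) :
    ∫ x, stdPhi (a + c * x) * normalPDF x 0 v = normalPDF 0 a (1 + c ^ 2 * v) := by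
  set w := 1 + c ^ 2 * v
  have hw : 0 < w := by positivity
  set K := (√(2 * π))⁻¹ * (√(2 * π * v))⁻¹ * exp (-(a ^ 2) / (2 * w))
  have hsquare (x : ℝ) : stdPhi (a + c * x) * normalPDF x 0 v
      = K * exp (-(w / (2 * v)) * (x + a * c * v / w) ^ 2) := by
    have hexponent : -((a + c * x) ^ 2) / 2 + -((x - 0) ^ 2) / (2 * v)
        = -(a ^ 2) / (2 * w) + -(w / (2 * v)) * (x + a * c * v / w) ^ 2 := by
      field_simp
      ring
    calc stdPhi (a + c * x) * normalPDF x 0 v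
        = (√(2 * π))⁻¹ * (√(2 * π * v))⁻¹ *
            exp (-((a + c * x) ^ 2) / 2 + -((x - 0) ^ 2) / (2 * v)) := by
          rw [stdPhi, normalPDF, exp_add]; ring
      _ = _ := by rw [hexponent, exp_add]; ring
  rw [integral_congr_ae (Eventually.of_forall hsquare), integral_const_mul,
    integral_add_right_eq_self (fun x => exp (-(w / (2 * v)) * x ^ 2)), integral_gaussian,
    show π / (w / (2 * v)) = 2 * π * v / w by field_simp, sqrt_div (by positivity),
    normalPDF, sqrt_mul (by positivity) w]
  have : 0 < √(2 * π * v) := sqrt_pos.2 (by positivity)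
  have : 0 < √(2 * π) := sqrt_pos.2 (by positivity)
  have : 0 < √w := sqrt_pos.2 hw
  simp only [K]
  field_simp
  ring_nf

end StdNormal

theorem integral_mul_mul_normalPDF {v : ℝ} (hv : 0 < v) {g g' : ℝ → ℝ} {C : ℝ}
    (hg : ∀ x, HasDerivAt g (g' x) x) (hC : ∀ x, |g x| ≤ C)
    (hg' : Integrable fun x => g' x * normalPDF x 0 v) :
    ∫ x, x * g x * normalPDF x 0 v = v * ∫ x, g' x * normalPDF x 0 v := by
  have hmeas : AEStronglyMeasurable g :=
    (continuous_iff_continuousAt.2 fun x => (hg x).continuousAt).aestronglyMeasurable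
  have hbdd : ∀ᵐ x, ‖g x‖ ≤ C := Eventually.of_forall hC
  have hdens (x : ℝ) : -((x - 0) / v) * normalPDF x 0 v = -v⁻¹ * (x * normalPDF x 0 v) := by
    ring
  have huv' : Integrable fun x => g x * (-((x - 0) / v) * normalPDF x 0 v) := by
    simpa only [hdens] using ((integrable_mul_normalPDF hv).const_mul (-v⁻¹)).bdd_mul hmeas hbdd
  have hparts := integral_mul_deriv_eq_deriv_mul_of_integrable
    (fun x _ => hg x) (fun x _ => hasDerivAt_normalPDF hv.ne' 0 x) huv' hg'
    ((integrable_normalPDF hv.le 0).bdd_mul hmeas hbdd)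
  have hintegrand (x : ℝ) : g x * (-((x - 0) / v) * normalPDF x 0 v)
      = -v⁻¹ * (x * g x * normalPDF x 0 v) := by
    ring
  simp only [hintegrand, integral_const_mul] at hparts
  field_simp at hparts
  linarith

/-- Univariate probit case: the population simple-regression slope
    Cov(X,Y)/Var(X) = E(XY)/σ²_X equals γ·φ(0; γ₀, 1 + γ²σ²_X), which is zero iff γ = 0. -/
theorem stmt14 (σX2 : ℝ) (hσ : 0 < σX2) (γ0 γ : ℝ) :
    (∫ x : ℝ, x * stdPhiCDF (γ0 + γ * x) * normalPDF x 0 σX2) / σX2 =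
        γ * normalPDF 0 γ0 (1 + γ ^ 2 * σX2) ∧
      ((∫ x : ℝ, x * stdPhiCDF (γ0 + γ * x) * normalPDF x 0 σX2) / σX2 = 0 ↔ γ = 0) := by
  have hderiv (x : ℝ) :
      HasDerivAt (fun x => stdPhiCDF (γ0 + γ * x)) (γ * stdPhi (γ0 + γ * x)) x :=
    ((hasDerivAt_stdPhiCDF _).comp x (((hasDerivAt_id' x).const_mul γ).const_add γ0)).congr_deriv
      (by ring)
  have hbound (x : ℝ) : |stdPhiCDF (γ0 + γ * x)| ≤ 1 :=
    abs_le.2 ⟨by linarith [stdPhiCDF_nonneg (γ0 + γ * x)], stdPhiCDF_le_one _⟩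
  have hslope : (∫ x : ℝ, x * stdPhiCDF (γ0 + γ * x) * normalPDF x 0 σX2) / σX2 =
      γ * normalPDF 0 γ0 (1 + γ ^ 2 * σX2) := by
    rw [integral_mul_mul_normalPDF hσ hderiv hbound (by simpa only [mul_assoc] using
      (integrable_stdPhi_affine_mul_normalPDF hσ.le γ0 γ).const_mul γ)]
    simp only [mul_assoc, integral_const_mul, integral_stdPhi_affine_mul_normalPDF hσ]
    field_simp
  refine ⟨hslope, ?_⟩
  rw [hslope, mul_eq_zero, or_iff_left (normalPDF_pos (by positivity) 0 γ0).ne']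
end

section
/- In the Biswas–Hwang bivariate binomial construction with marginals X₁ ~ Bin(2,p₁), X₂ ~ Bin(2,p₂) and parameter α satisfying the validity condition, the correlation coefficient of X₁ and X₂ equals (α/(1+α))·√(p₁(1−p₁)/(p₂(1−p₂))). -/
open Finset

/-
Conditionally on `X₁ = x₁`, `X₂` is a sum of two Bernoulli variables, `x₁` of them with success
probability `p̃₂` and the others with `p̃₁`, so `E[X₂ | X₁] = 2p̃₁ + (p̃₂ - p̃₁) X₁` is affine in `X₁`.
Hence `Cov(X₁, X₂) = (p̃₂ - p̃₁) Var X₁ = (α/(1+α)) · 2p₁(1-p₁)`, and dividing by the standard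
deviations `√(2p₁(1-p₁))` and `√(2p₂(1-p₂))` gives the correlation.
-/

/-- Bin(2,t) pmf. -/
noncomputable def bin2 (t : ℝ) (k : ℕ) : ℝ := (Nat.choose 2 k : ℝ) * t ^ k * (1 - t) ^ (2 - k)

/-- Biswas–Hwang conditional pmf of X₂ given X₁ = x₁. -/
noncomputable def bhCond (t1 t2 : ℝ) (x1 x2 : ℕ) : ℝ :=
  if x1 = 0 then bin2 t1 x2
  else if x1 = 1 then
    (if x2 = 0 then (1 - t1) * (1 - t2)
     else if x2 = 1 then (1 - t1) * t2 + t1 * (1 - t2)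
     else if x2 = 2 then t1 * t2 else 0)
  else bin2 t2 x2

/-- Joint pmf of the Biswas–Hwang bivariate binomial. -/
noncomputable def bhJoint (p1 t1 t2 : ℝ) (x1 x2 : ℕ) : ℝ := bin2 p1 x1 * bhCond t1 t2 x1 x2

theorem sum_mul_bin2 (t : ℝ) : ∑ k ∈ ({0, 1, 2} : Finset ℕ), (k : ℝ) * bin2 t k = 2 * t := by
  simp [bin2]
  ring

theorem sum_sq_mul_bin2 (t : ℝ) :
    ∑ k ∈ ({0, 1, 2} : Finset ℕ), (k : ℝ) ^ 2 * bin2 t k = 2 * t * (1 - t) + (2 * t) ^ 2 := by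
  simp [bin2]
  ring

theorem sum_mul_bhCond (t1 t2 : ℝ) {x1 : ℕ} (hx1 : x1 ∈ ({0, 1, 2} : Finset ℕ)) :
    ∑ x2 ∈ ({0, 1, 2} : Finset ℕ), (x2 : ℝ) * bhCond t1 t2 x1 x2 = 2 * t1 + x1 * (t2 - t1) := by
  simp only [mem_insert, mem_singleton] at hx1
  rcases hx1 with rfl | rfl | rfl
  · simp only [bhCond, if_pos, sum_mul_bin2, CharP.cast_eq_zero]
    ring
  · simp [bhCond]
    ring
  · simp only [bhCond, OfNat.ofNat_ne_zero, OfNat.ofNat_ne_one, if_false, sum_mul_bin2]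
    push_cast
    ring

theorem sum_mul_mul_bhJoint (p1 t1 t2 : ℝ) :
    ∑ x1 ∈ ({0, 1, 2} : Finset ℕ), ∑ x2 ∈ ({0, 1, 2} : Finset ℕ),
        (x1 : ℝ) * (x2 : ℝ) * bhJoint p1 t1 t2 x1 x2 =
      2 * t1 * (2 * p1) + (t2 - t1) * (2 * p1 * (1 - p1) + (2 * p1) ^ 2) := by
  have hcond : ∀ x1 ∈ ({0, 1, 2} : Finset ℕ),
      ∑ x2 ∈ ({0, 1, 2} : Finset ℕ), (x1 : ℝ) * (x2 : ℝ) * bhJoint p1 t1 t2 x1 x2 =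
        2 * t1 * ((x1 : ℝ) * bin2 p1 x1) + (t2 - t1) * ((x1 : ℝ) ^ 2 * bin2 p1 x1) := by
    intro x1 hx1
    have hmean := sum_mul_bhCond t1 t2 hx1
    calc ∑ x2 ∈ ({0, 1, 2} : Finset ℕ), (x1 : ℝ) * (x2 : ℝ) * bhJoint p1 t1 t2 x1 x2
        = (x1 : ℝ) * bin2 p1 x1 * ∑ x2 ∈ ({0, 1, 2} : Finset ℕ), (x2 : ℝ) * bhCond t1 t2 x1 x2 := by
          rw [mul_sum]
          refine sum_congr rfl fun x2 _ => ?_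
          rw [bhJoint]
          ring
      _ = _ := by rw [hmean]; ring
  rw [sum_congr rfl hcond, sum_add_distrib, ← mul_sum, ← mul_sum, sum_mul_bin2, sum_sq_mul_bin2]

theorem bh_covariance {p1 p2 α t1 t2 : ℝ} (hα : 1 + α ≠ 0)
    (ht1 : t1 = (p2 + α * (p2 - p1)) / (1 + α)) (ht2 : t2 = t1 + α / (1 + α)) :
    ∑ x1 ∈ ({0, 1, 2} : Finset ℕ), ∑ x2 ∈ ({0, 1, 2} : Finset ℕ),
        (x1 : ℝ) * (x2 : ℝ) * bhJoint p1 t1 t2 x1 x2 - (2 * p1) * (2 * p2) =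
      α / (1 + α) * (2 * (p1 * (1 - p1))) := by
  rw [sum_mul_mul_bhJoint, ht2, ht1]
  field_simp
  ring

theorem Real.mul_div_sqrt_two_mul_sqrt_two_mul (c : ℝ) {x : ℝ} (hx : 0 ≤ x) (y : ℝ) :
    c * (2 * x) / (√(2 * x) * √(2 * y)) = c * √(x / y) := by
  rw [mul_div_assoc, ← div_div, Real.div_sqrt, ← Real.sqrt_div (by positivity),
    mul_div_mul_left _ _ two_ne_zero]

theorem stmt19_general (p1 p2 α : ℝ) (hα : 0 ≤ α)
    (hp1 : 0 < p1) (hp1' : p1 < 1)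
    (t1 t2 : ℝ) (ht1 : t1 = (p2 + α * (p2 - p1)) / (1 + α))
    (ht2 : t2 = t1 + α / (1 + α)) :
    ((∑ x1 ∈ ({0, 1, 2} : Finset ℕ), ∑ x2 ∈ ({0, 1, 2} : Finset ℕ),
          (x1 : ℝ) * (x2 : ℝ) * bhJoint p1 t1 t2 x1 x2) - (2 * p1) * (2 * p2)) /
        (Real.sqrt (2 * p1 * (1 - p1)) * Real.sqrt (2 * p2 * (1 - p2))) =
      (α / (1 + α)) * Real.sqrt (p1 * (1 - p1) / (p2 * (1 - p2))) := by
  rw [bh_covariance (by positivity) ht1 ht2, mul_assoc 2 p1, mul_assoc 2 p2]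
  exact Real.mul_div_sqrt_two_mul_sqrt_two_mul _ (mul_nonneg hp1.le (sub_nonneg.2 hp1'.le)) _

/-- Correlation of the Biswas–Hwang bivariate binomial:
    Corr(X₁,X₂) = (α/(1+α))·√(p₁(1−p₁)/(p₂(1−p₂))). Marginal means are 2p₁, 2p₂ and
    variances 2p₁(1−p₁), 2p₂(1−p₂). -/
theorem stmt19 (p1 p2 α : ℝ) (hα : 0 ≤ α)
    (hp1 : 0 < p1) (hp1' : p1 < 1) (hp2 : 0 < p2) (hp2' : p2 < 1)
    (hvalid1 : (α / (1 + α)) * p1 ≤ p2) (hvalid2 : p2 ≤ (α / (1 + α)) * p1 + 1 / (1 + α))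
    (t1 t2 : ℝ) (ht1 : t1 = (p2 + α * (p2 - p1)) / (1 + α))
    (ht2 : t2 = t1 + α / (1 + α)) :
    ((∑ x1 ∈ ({0, 1, 2} : Finset ℕ), ∑ x2 ∈ ({0, 1, 2} : Finset ℕ),
          (x1 : ℝ) * (x2 : ℝ) * bhJoint p1 t1 t2 x1 x2) - (2 * p1) * (2 * p2)) /
        (Real.sqrt (2 * p1 * (1 - p1)) * Real.sqrt (2 * p2 * (1 - p2))) =
      (α / (1 + α)) * Real.sqrt (p1 * (1 - p1) / (p2 * (1 - p2))) :=
  stmt19_general p1 p2 α hα hp1 hp1' t1 t2 ht1 ht2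
end
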